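/- arXiv:1602.00935 — 3 statements merged into one kernel-verified Lean document; each statement's English description precedes it below -/
import Mathlib

section
/- Let D be a connected simple digraph on {1,…,n} with n ≥ 2. The following are equivalent: (i) ℓ(D, α) = n − rk(α) for every α ∈ ⟨D⟩; (ii) every element of ⟨D⟩ is idempotent (⟨D⟩ is a band); (iii) either n = 2 and D is the complete digraph on two vertices, or there exists a partition of {1,…,n} into two sets V1 and V2 such that every edge (i1, i2) of D has i1 ∈ V1 and i2 ∈ V2. -/
noncomputable section

variable {V : Type*}

/-- The arc `(a→b)`: the map sending `a` to `b` and fixing every other point. -/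
def arcMap [DecidableEq V] (a b : V) : V → V := fun x => if x = a then b else x

/-- Evaluate a word of arcs, applying the arcs from left to right. -/
def wordEval [DecidableEq V] (w : List (V × V)) : V → V :=
  fun x => w.foldl (fun y e => arcMap e.1 e.2 y) x

/-- `α ∈ ⟨D⟩`: `α` is a (nonempty) product of arcs of the digraph `D`. -/
def InGen [DecidableEq V] (D : V → V → Prop) (α : V → V) : Prop :=
  ∃ w : List (V × V), w ≠ [] ∧ (∀ e ∈ w, D e.1 e.2) ∧ wordEval w = α

/-- `ℓ(D, α)`: the minimal length of a word in the arcs of `D` expressing `α`. -/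
def arcLen [DecidableEq V] (D : V → V → Prop) (α : V → V) : ℕ :=
  sInf {k | ∃ w : List (V × V), w.length = k ∧ (∀ e ∈ w, D e.1 e.2) ∧ wordEval w = α}

/-- `fix(α)`: the number of fixed points of `α`. -/
def fixCnt (α : V → V) : ℕ := Set.ncard {x | α x = x}

/-- `rk(α)`: the rank of `α`, i.e. the cardinality of its image. -/
def rnk (α : V → V) : ℕ := Set.ncard (Set.range α)

/-- A set `C` is a cyclic orbit of `α` if it is a weakly connected component of the
functional digraph of `α` (edges `(x, α x)`) which is a directed cycle on at least two
vertices: equivalently, `C` is the forward orbit of a periodic point, has at least two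
elements, and is closed under taking preimages. -/
def IsCyclicOrbit (α : V → V) (C : Set V) : Prop :=
  2 ≤ C.ncard ∧ (∃ x ∈ C, (∃ k, 0 < k ∧ α^[k] x = x) ∧ C = {y | ∃ k, α^[k] x = y}) ∧
    ∀ y : V, α y ∈ C → y ∈ C

/-- `cycl(α)`: the number of cyclic orbits of `α`. -/
def cyclCnt (α : V → V) : ℕ := Set.ncard {C : Set V | IsCyclicOrbit α C}

/-- `D` is connected: any two vertices are joined by a directed path in some direction. -/
def ConnectedDigraph (D : V → V → Prop) : Prop :=
  ∀ u v : V, Relation.ReflTransGen D u v ∨ Relation.ReflTransGen D v u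

/-- `D` is closed (equal to its closure): whenever `(b,a)` is an edge lying on a directed
cycle of `D` (i.e. there is a directed path from `a` back to `b`), `(a,b)` is also an edge. -/
def ClosedDigraph (D : V → V → Prop) : Prop :=
  ∀ a b : V, D b a → Relation.ReflTransGen D a b → D a b

/-- Property (★): if `v0, v1, v2` is a directed path with `d_D(v0,v2) = 2`, then every
out-neighbour of `v1` and of `v2` lies in `{v0, v1, v2}`. -/
def StarCond (D : V → V → Prop) : Prop :=
  ∀ v0 v1 v2 : V, D v0 v1 → D v1 v2 → v0 ≠ v2 → ¬ D v0 v2 →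
    ∀ u : V, (D v1 u ∨ D v2 u) → (u = v0 ∨ u = v1 ∨ u = v2)

/-- `C` is a strong component of `D`. -/
def IsSC (D : V → V → Prop) (C : Set V) : Prop :=
  ∃ v : V, C = {u | Relation.ReflTransGen D u v ∧ Relation.ReflTransGen D v u}

/-- `C1` connects to `C2`: some edge goes from `C1` to `C2`. -/
def ConnectsTo (D : V → V → Prop) (C1 C2 : Set V) : Prop :=
  ∃ v1 ∈ C1, ∃ v2 ∈ C2, D v1 v2

/-- `C1` fully connects to `C2`: all pairs are edges. -/
def FullyConnects (D : V → V → Prop) (C1 C2 : Set V) : Prop :=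
  ∀ v1 ∈ C1, ∀ v2 ∈ C2, D v1 v2

/-- A terminal strong component: it connects to no other strong component. -/
def IsTerminalSC (D : V → V → Prop) (C : Set V) : Prop :=
  IsSC D C ∧ ∀ C' : Set V, IsSC D C' → C' ≠ C → ¬ ConnectsTo D C C'

/-- Property (★★): nonterminal strong components have at most 2 vertices and terminal
strong components have at most 3 vertices. -/
def StarStarCond (D : V → V → Prop) : Prop :=
  ∀ C : Set V, IsSC D C →
    (IsTerminalSC D C → C.ncard ≤ 3) ∧ (¬ IsTerminalSC D C → C.ncard ≤ 2)

/-- The induced subdigraph on `C` is an undirected path `a - b - c` on three vertices. -/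
def IsP3 (D : V → V → Prop) (C : Set V) : Prop :=
  ∃ a b c : V, a ≠ b ∧ b ≠ c ∧ a ≠ c ∧ C = {a, b, c} ∧
    ∀ u ∈ C, ∀ w ∈ C,
      (D u w ↔ (u = a ∧ w = b) ∨ (u = b ∧ w = a) ∨ (u = b ∧ w = c) ∨ (u = c ∧ w = b))

/-- `D` has a subdigraph isomorphic to `H`: an injection mapping edges of `H` to edges of `D`. -/
def HasSubdigraph (D : V → V → Prop) {m : ℕ} (H : Fin m → Fin m → Prop) : Prop :=
  ∃ f : Fin m → V, Function.Injective f ∧ ∀ i j : Fin m, H i j → D (f i) (f j)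

/-- `Θ_k`: the directed cycle on `k` vertices. -/
def Theta (k : ℕ) : Fin k → Fin k → Prop := fun i j => (j : ℕ) = ((i : ℕ) + 1) % k

/-- `Γ1` (vertices relabelled from `{1,…,5}` to `{0,…,4}`). -/
def Gamma1 : Fin 5 → Fin 5 → Prop := fun i j =>
  ((i : ℕ), (j : ℕ)) ∈ [(0,3),(3,0),(1,3),(3,1),(2,3),(3,2),(3,4)]

/-- `Γ2` (vertices relabelled from `{1,…,5}` to `{0,…,4}`). -/
def Gamma2 : Fin 5 → Fin 5 → Prop := fun i j =>
  ((i : ℕ), (j : ℕ)) ∈ [(0,2),(2,0),(1,2),(2,1),(2,3),(3,2),(3,4)]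

/-- `Γ3` (vertices relabelled from `{1,…,4}` to `{0,…,3}`). -/
def Gamma3 : Fin 4 → Fin 4 → Prop := fun i j =>
  ((i : ℕ), (j : ℕ)) ∈ [(0,1),(1,2),(2,0),(2,3)]

/-- `Γ4` (vertices relabelled from `{1,…,5}` to `{0,…,4}`). -/
def Gamma4 : Fin 5 → Fin 5 → Prop := fun i j =>
  ((i : ℕ), (j : ℕ)) ∈ [(0,1),(1,2),(2,3),(3,0),(3,4)]

/-- No subdigraph isomorphic to `Γ1`, `Γ2`, `Γ3`, `Γ4` or `Θ_k` for `k ≥ 5`. -/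
def ForbiddenFree (D : V → V → Prop) : Prop :=
  ¬ HasSubdigraph D Gamma1 ∧ ¬ HasSubdigraph D Gamma2 ∧ ¬ HasSubdigraph D Gamma3 ∧
    ¬ HasSubdigraph D Gamma4 ∧ ∀ k : ℕ, 5 ≤ k → ¬ HasSubdigraph D (Theta k)

/-- `D` is acyclic: it has no directed cycle. -/
def AcyclicRel (D : V → V → Prop) : Prop := ∀ v : V, ¬ Relation.TransGen D v v

/-- `ψ_A(u,w)`: the maximal number of edges of a directed path from `u` to `w` in `A`
(in particular `ψ_A(u,u) = 0`). -/
def psiLongest (A : V → V → Prop) (u w : V) : ℕ :=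
  sSup {l | ∃ p : List V, p.Chain' A ∧ p.Nodup ∧
    p.head? = some u ∧ p.getLast? = some w ∧ p.length = l + 1}

/-- `d_D(u,w)`: the minimal number of edges of a directed path from `u` to `w` in `D`. -/
def ddist (D : V → V → Prop) (u w : V) : ℕ :=
  sInf {l | ∃ p : List V, p.Chain' D ∧ p.head? = some u ∧ p.getLast? = some w ∧
    p.length = l + 1}

/-- A tournament: no loops, and exactly one of `(u,v)`, `(v,u)` is an edge for `u ≠ v`. -/
def IsTournament (D : V → V → Prop) : Prop :=
  (∀ v : V, ¬ D v v) ∧ ∀ u v : V, u ≠ v → (D u v ∨ D v u) ∧ ¬ (D u v ∧ D v u)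

/-- A strong (strongly connected) digraph. -/
def IsStrongDigraph (D : V → V → Prop) : Prop :=
  ∀ u v : V, Relation.ReflTransGen D u v

/-!
All three conditions say that every directed path `a → b → c` of `D` returns, `c = a`.
If some path has `c ≠ a`, the product `β` of `(b→c)` followed by `(a→b)` sends `a ↦ b ↦ c`:
it is not idempotent, and it has rank `n - 1` although it moves two points, so it is not a
single arc. If every path of length two returns, an induction on words shows that each
`α ∈ ⟨D⟩` is idempotent and `(x, α x)` is an edge whenever `α x ≠ x`; then `α` is the product
of the `n - rk α` arcs `(x→α x)` over its moved points, and no shorter word will do because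
an arc lowers the rank by at most one. Finally, in a connected digraph every path of length
two returns iff `D` is `K₂` or every vertex with an out-edge has no in-edge.
-/

section Arcs

variable [DecidableEq V] {D : V → V → Prop}

@[simp]
lemma arcMap_self (a b : V) : arcMap a b a = b := if_pos rfl

lemma arcMap_of_ne {a b x : V} (h : x ≠ a) : arcMap a b x = x := if_neg h

lemma eq_of_arcMap_ne {a b x : V} (h : arcMap a b x ≠ x) : x = a :=
  not_imp_comm.mp arcMap_of_ne h

@[simp]
lemma wordEval_nil : wordEval ([] : List (V × V)) = id := rfl

lemma wordEval_append_singleton (w : List (V × V)) (e : V × V) :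
    wordEval (w ++ [e]) = arcMap e.1 e.2 ∘ wordEval w := by
  funext x
  simp [wordEval, List.foldl_append]

lemma rnk_le_rnk_arcMap_comp_add_one [Finite V] (a b : V) (f : V → V) :
    rnk f ≤ rnk (arcMap a b ∘ f) + 1 := by
  have hsub : Set.range f ⊆ insert a (Set.range (arcMap a b ∘ f)) := by
    rintro _ ⟨x, rfl⟩
    by_cases h : f x = a
    · exact Or.inl h
    · exact Or.inr ⟨x, arcMap_of_ne h⟩
  exact (Set.ncard_le_ncard hsub).trans (Set.ncard_insert_le _ _)

lemma card_le_length_add_rnk_wordEval [Finite V] (w : List (V × V)) :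
    Nat.card V ≤ w.length + rnk (wordEval w) := by
  induction w using List.reverseRecOn with
  | nil => simp [rnk, Set.ncard_univ]
  | append_singleton w e ih =>
    have := rnk_le_rnk_arcMap_comp_add_one e.1 e.2 (wordEval w)
    rw [wordEval_append_singleton, List.length_append, List.length_singleton]
    omega

lemma exists_word_length_eq_arcLen {α : V → V} (hα : InGen D α) :
    ∃ w : List (V × V), w.length = arcLen D α ∧ (∀ e ∈ w, D e.1 e.2) ∧ wordEval w = α := by
  obtain ⟨w, -, hw, hwα⟩ := hα
  exact Nat.sInf_mem (s := {k | ∃ w : List (V × V), w.length = k ∧ (∀ e ∈ w, D e.1 e.2) ∧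
    wordEval w = α}) ⟨w.length, w, rfl, hw, hwα⟩

lemma card_le_arcLen_add_rnk [Finite V] {α : V → V} (hα : InGen D α) :
    Nat.card V ≤ arcLen D α + rnk α := by
  obtain ⟨w, hlen, -, rfl⟩ := exists_word_length_eq_arcLen hα
  exact hlen ▸ card_le_length_add_rnk_wordEval w

lemma wordEval_map_graph {α : V → V} (hα : ∀ x, α (α x) = α x) {l : List V}
    (hl : ∀ x ∈ l, α x ≠ x) (z : V) :
    wordEval (l.map fun x => (x, α x)) z = if z ∈ l then α z else z := by
  induction l generalizing z with
  | nil => rfl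
  | cons x l ih =>
    have hl' : ∀ y ∈ l, α y ≠ y := fun y hy => hl y (List.mem_cons_of_mem _ hy)
    change wordEval (l.map fun x => (x, α x)) (arcMap x (α x) z) = _
    by_cases hz : z = x
    · subst hz
      have hαz : α z ∉ l := fun h => hl' _ h (hα z)
      simp [ih hl', hαz]
    · simp [arcMap_of_ne hz, ih hl', hz]

def IsEdgeRetraction (D : V → V → Prop) (α : V → V) : Prop :=
  (∀ x, α (α x) = α x) ∧ ∀ x, α x ≠ x → D x (α x)

lemma IsEdgeRetraction.arcLen_add_rnk_le [Finite V] {α : V → V}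
    (hα : IsEdgeRetraction D α) : arcLen D α + rnk α ≤ Nat.card V := by
  set M := {x | α x ≠ x}
  have hM : M.Finite := Set.toFinite M
  have hl : ∀ x ∈ hM.toFinset.toList, α x ≠ x := by simp [M]
  have hrange : Set.range α = Mᶜ := by
    ext y
    refine ⟨?_, fun hy => ⟨y, not_not.mp hy⟩⟩
    rintro ⟨x, rfl⟩
    exact not_not.mpr (hα.1 x)
  have hlen : arcLen D α ≤ M.ncard := by
    refine Nat.sInf_le ⟨hM.toFinset.toList.map fun x => (x, α x), ?_, ?_, ?_⟩
    · rw [List.length_map, Finset.length_toList, Set.ncard_eq_toFinset_card _ hM]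
    · simp only [List.mem_map]
      rintro _ ⟨x, hx, rfl⟩
      exact hα.2 x (hl x hx)
    · funext z
      rw [wordEval_map_graph hα.1 hl]
      by_cases hz : z ∈ M <;> simp_all [M]
  have hcard := Set.ncard_add_ncard_compl M
  rw [rnk, hrange]
  omega

def TwoPathsReturn (D : V → V → Prop) : Prop :=
  ∀ a b c : V, D a b → D b c → c = a

lemma IsEdgeRetraction.arcMap_comp (hD : TwoPathsReturn D) {α : V → V}
    (hα : IsEdgeRetraction D α) {a b : V} (hab : D a b) :
    IsEdgeRetraction D (arcMap a b ∘ α) := by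
  obtain ⟨hidem, hedge⟩ := hα
  -- a point sent to `a` by `α` other than `a` itself is an in-neighbour of `a`, hence equals `b`
  have hback : ∀ x, α x = a → x ≠ a → x = b := fun x hx hxa =>
    (hD x a b (hx ▸ hedge x (hx ▸ hxa).symm) hab).symm
  have hb : α b = b ∨ α b = a := by
    by_cases h : α b = b
    · exact Or.inl h
    · exact Or.inr (hD a b _ hab (hedge b h))
  refine ⟨fun x => ?_, fun x hx => ?_⟩ <;> by_cases hxa : α x = a
  · by_cases h : x = a
    · subst h
      rcases hb with h | h <;> simp [hxa, h, arcMap]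
    · obtain rfl := hback x hxa h
      simp [hxa]
  · simp [arcMap_of_ne hxa, hidem]
  · by_cases h : x = a
    · subst h
      simpa [hxa] using hab
    · obtain rfl := hback x hxa h
      simp [hxa] at hx
  · simp only [Function.comp, arcMap_of_ne hxa] at hx ⊢
    exact hedge x hx

lemma isEdgeRetraction_wordEval (hD : TwoPathsReturn D) {w : List (V × V)}
    (hw : ∀ e ∈ w, D e.1 e.2) : IsEdgeRetraction D (wordEval w) := by
  induction w using List.reverseRecOn with
  | nil => exact ⟨fun _ => rfl, fun x hx => absurd rfl hx⟩
  | append_singleton w e ih =>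
    rw [wordEval_append_singleton]
    exact (ih fun e' he' => hw e' (by simp [he'])).arcMap_comp hD (hw e (by simp))

lemma isEdgeRetraction_of_inGen (hD : TwoPathsReturn D) {α : V → V} (hα : InGen D α) :
    IsEdgeRetraction D α := by
  obtain ⟨w, -, hw, rfl⟩ := hα
  exact isEdgeRetraction_wordEval hD hw

lemma exists_inGen_of_not_twoPathsReturn (hloop : ∀ v, ¬ D v v) (hD : ¬ TwoPathsReturn D) :
    ∃ (β : V → V) (a b : V), InGen D β ∧ a ≠ b ∧ β a = b ∧ β b ≠ b ∧ β (β a) ≠ β a ∧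
      {a}ᶜ ⊆ Set.range β := by
  simp only [TwoPathsReturn, not_forall] at hD
  obtain ⟨a, b, c, hab, hbc, hca⟩ := hD
  have hab' : a ≠ b := fun h => hloop a (h ▸ hab)
  have hbc' : b ≠ c := fun h => hloop b (h ▸ hbc)
  have hβ : wordEval [(b, c), (a, b)] = arcMap a b ∘ arcMap b c := rfl
  have hβa : wordEval [(b, c), (a, b)] a = b := by simp [hβ, arcMap_of_ne hab']
  have hβb : wordEval [(b, c), (a, b)] b = c := by simp [hβ, arcMap_of_ne hca]
  refine ⟨_, a, b, ⟨_, by simp, ?_, rfl⟩, hab', hβa, ?_, ?_, fun y hya => ?_⟩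
  · simp [hab, hbc]
  · rw [hβb]; exact hbc'.symm
  · rw [hβa, hβb]; exact hbc'.symm
  · by_cases hyb : y = b
    · exact ⟨a, hyb ▸ hβa⟩
    · exact ⟨y, by simp [hβ, arcMap_of_ne hya, arcMap_of_ne hyb]⟩

lemma twoPathsReturn_of_idempotent (hloop : ∀ v, ¬ D v v)
    (h : ∀ α : V → V, InGen D α → α ∘ α = α) : TwoPathsReturn D := by
  by_contra hD
  obtain ⟨β, a, -, hβ, -, -, -, hβa, -⟩ := exists_inGen_of_not_twoPathsReturn hloop hD
  exact hβa (congrFun (h β hβ) a)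

lemma twoPathsReturn_of_arcLen_eq [Finite V] (hloop : ∀ v, ¬ D v v)
    (h : ∀ α : V → V, InGen D α → arcLen D α = Nat.card V - rnk α) : TwoPathsReturn D := by
  by_contra hD
  obtain ⟨β, a, b, hβ, hab, hβa, hβb, -, hrange⟩ :=
    exists_inGen_of_not_twoPathsReturn hloop hD
  have hrnk : Nat.card V - 1 ≤ rnk β := by
    have := Set.ncard_add_ncard_compl {a}
    rw [Set.ncard_singleton] at this
    have := Set.ncard_le_ncard hrange
    unfold rnk
    omega
  obtain ⟨w, hlen, -, rfl⟩ := exists_word_length_eq_arcLen hβ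
  have hw : w.length ≤ 1 := by rw [hlen, h _ hβ]; omega
  match w, hw with
  | [], _ => exact hab hβa
  | [e], _ =>
    have ha : a = e.1 := eq_of_arcMap_ne (hβa.trans_ne hab.symm)
    have hb : b = e.1 := eq_of_arcMap_ne hβb
    exact hab (ha.trans hb.symm)

end Arcs

section Connected

variable {D : V → V → Prop}

lemma Relation.ReflTransGen.mem_iff_of_edge {S : Set V} (hS : ∀ x y, D x y → (x ∈ S ↔ y ∈ S))
    {u v : V} (h : Relation.ReflTransGen D u v) : u ∈ S ↔ v ∈ S := by
  induction h with
  | refl => rfl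
  | tail _ hyz ih => exact ih.trans (hS _ _ hyz)

lemma ConnectedDigraph.mem_of_edge_iff (hconn : ConnectedDigraph D) {S : Set V}
    (hS : ∀ x y, D x y → (x ∈ S ↔ y ∈ S)) {a : V} (ha : a ∈ S) (v : V) : v ∈ S := by
  rcases hconn v a with h | h
  · exact (h.mem_iff_of_edge hS).mpr ha
  · exact (h.mem_iff_of_edge hS).mp ha

lemma TwoPathsReturn.eq_or_eq_of_two_cycle (hD : TwoPathsReturn D) (hconn : ConnectedDigraph D)
    {a b : V} (hab : D a b) (hba : D b a) (v : V) : v = a ∨ v = b := by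
  refine hconn.mem_of_edge_iff (S := {a, b}) (fun x y hxy => ?_) (Or.inl rfl) v
  simp only [Set.mem_insert_iff, Set.mem_singleton_iff]
  constructor
  · rintro (rfl | rfl)
    · exact Or.inr (hD b x y hba hxy)
    · exact Or.inl (hD a x y hab hxy)
  · rintro (rfl | rfl)
    · exact Or.inr (hD x y b hxy hab).symm
    · exact Or.inl (hD x y a hxy hba).symm

lemma twoPathsReturn_iff (hloop : ∀ v, ¬ D v v) (hconn : ConnectedDigraph D) :
    TwoPathsReturn D ↔ (Nat.card V = 2 ∧ ∀ a b : V, a ≠ b → D a b) ∨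
      ∃ V1 V2 : Set V, V1 ∪ V2 = Set.univ ∧ Disjoint V1 V2 ∧ ∀ a b : V, D a b → a ∈ V1 ∧ b ∈ V2 := by
  constructor
  · intro hD
    by_cases hcycle : ∃ a b, D a b ∧ D b a
    · obtain ⟨a, b, hab, hba⟩ := hcycle
      have hab' : a ≠ b := fun h => hloop a (h ▸ hab)
      have hV := hD.eq_or_eq_of_two_cycle hconn hab hba
      refine Or.inl ⟨Nat.card_eq_two_iff.mpr ⟨a, b, hab', Set.eq_univ_of_forall hV⟩, ?_⟩
      intro x y hxy
      rcases hV x with rfl | rfl <;> rcases hV y with rfl | rfl <;> tauto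
    · refine Or.inr ⟨{v | ∃ u, D v u}, {v | ∃ u, D v u}ᶜ, Set.union_compl_self _,
        disjoint_compl_right, fun a b hab => ⟨⟨b, hab⟩, ?_⟩⟩
      rintro ⟨c, hbc⟩
      exact hcycle ⟨a, b, hab, hD a b c hab hbc ▸ hbc⟩
  · rintro (⟨hcard, -⟩ | ⟨V1, V2, -, hdisj, hV⟩) a b c hab hbc
    · by_contra hca
      have : Finite V := Nat.finite_of_card_ne_zero (by omega)
      have h3 : ({a, b, c} : Set V).ncard = 3 := Set.ncard_eq_three.mpr
        ⟨a, b, c, fun h => hloop a (h ▸ hab), Ne.symm hca, fun h => hloop b (h ▸ hbc), rfl⟩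
      have := Set.ncard_le_card ({a, b, c} : Set V)
      omega
    · exact (Set.disjoint_left.mp hdisj (hV b c hbc).1 (hV a b hab).2).elim

end Connected

theorem stmt11_general (n : ℕ) (D : Fin n → Fin n → Prop) (hloop : ∀ v, ¬ D v v)
    (hconn : ConnectedDigraph D) :
    ((∀ α : Fin n → Fin n, InGen D α → arcLen D α = n - rnk α) ↔
      (∀ α : Fin n → Fin n, InGen D α → α ∘ α = α)) ∧
    ((∀ α : Fin n → Fin n, InGen D α → α ∘ α = α) ↔
      ((n = 2 ∧ ∀ a b : Fin n, a ≠ b → D a b) ∨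
        ∃ V1 V2 : Set (Fin n), V1 ∪ V2 = Set.univ ∧ Disjoint V1 V2 ∧
          ∀ a b : Fin n, D a b → a ∈ V1 ∧ b ∈ V2)) := by
  have hlen : (∀ α : Fin n → Fin n, InGen D α → arcLen D α = n - rnk α) ↔ TwoPathsReturn D := by
    refine ⟨fun h => twoPathsReturn_of_arcLen_eq hloop (by simpa only [Nat.card_fin] using h),
      fun hD α hα => ?_⟩
    have hlower := card_le_arcLen_add_rnk hα
    have hupper := (isEdgeRetraction_of_inGen hD hα).arcLen_add_rnk_le
    rw [Nat.card_fin] at hlower hupper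
    omega
  have hband : (∀ α : Fin n → Fin n, InGen D α → α ∘ α = α) ↔ TwoPathsReturn D :=
    ⟨twoPathsReturn_of_idempotent hloop,
      fun hD α hα => funext (isEdgeRetraction_of_inGen hD hα).1⟩
  have hstruct := twoPathsReturn_iff hloop hconn
  rw [Nat.card_fin] at hstruct
  exact ⟨hlen.trans hband.symm, hband.trans hstruct⟩

/-- for a connected simple digraph `D` on `{1,…,n}`, `n ≥ 2`, the following
are equivalent: (i) `ℓ(D, α) = n − rk(α)` for all `α ∈ ⟨D⟩`; (ii) `⟨D⟩` is a band;
(iii) `n = 2` and `D = K_2`, or the edges of `D` go from a set `V1` to its complement `V2`. -/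
theorem stmt11 (n : ℕ) (hn : 2 ≤ n) (D : Fin n → Fin n → Prop) (hloop : ∀ v, ¬ D v v)
    (hconn : ConnectedDigraph D) :
    ((∀ α : Fin n → Fin n, InGen D α → arcLen D α = n - rnk α) ↔
      (∀ α : Fin n → Fin n, InGen D α → α ∘ α = α)) ∧
    ((∀ α : Fin n → Fin n, InGen D α → α ∘ α = α) ↔
      ((n = 2 ∧ ∀ a b : Fin n, a ≠ b → D a b) ∨
        ∃ V1 V2 : Set (Fin n), V1 ∪ V2 = Set.univ ∧ Disjoint V1 V2 ∧
          ∀ a b : Fin n, D a b → a ∈ V1 ∧ b ∈ V2)) :=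
  stmt11_general n D hloop hconn
end
end

section
/- Let n ≥ 3 and 2 ≤ r ≤ n − 1, and let Q_n be the acyclic digraph on {1,…,n} with edge set {(u, u+1) : 1 ≤ u ≤ n−1} ∪ {(n−2, n)}. Then there exists a transformation β ∈ ⟨Q_n⟩ of rank r such that ℓ(Q_n, β) ≥ (n−r)(n+r−3)/2 + 1. -/
noncomputable section

variable {V : Type*}

/-- The acyclic digraph `Q_n` (0-indexed): edges `(u, u+1)` for all `u`, plus `(n−3, n−1)`
(which is `(n−2, n)` in the paper's 1-indexed notation). -/
def Qdigraph (n : ℕ) : Fin n → Fin n → Prop := fun a b =>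
  (b : ℕ) = (a : ℕ) + 1 ∨ ((a : ℕ) = n - 3 ∧ (b : ℕ) = n - 1)

namespace S14

def nArc (a b x : ℕ) : ℕ := if x = a then b else x

def nEval (w : List (ℕ × ℕ)) (x : ℕ) : ℕ := w.foldl (fun y e => nArc e.1 e.2 y) x

def nQ (n : ℕ) (e : ℕ × ℕ) : Prop :=
  (e.2 = e.1 + 1 ∨ (e.1 = n - 3 ∧ e.2 = n - 1)) ∧ e.2 < n

def bv (n r x : ℕ) : ℕ :=
  if x + 3 ≤ r then n - r + x
  else if x + 3 ≤ n then (if (n - 3 - x) % 2 = 0 then n - 2 else n - 1)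
  else n - 1

def tgt (n r x : ℕ) : ℕ :=
  if x + 3 ≤ r then n - r
  else if x + 3 ≤ n then n - 2 - x
  else if x + 2 ≤ n then 1 else 0

@[simp] lemma nEval_nil (x : ℕ) : nEval [] x = x := rfl

lemma nEval_cons (e : ℕ × ℕ) (w : List (ℕ × ℕ)) (x : ℕ) :
    nEval (e :: w) x = nEval w (nArc e.1 e.2 x) := rfl

lemma nEval_append (u v : List (ℕ × ℕ)) (x : ℕ) :
    nEval (u ++ v) x = nEval v (nEval u x) := by
  simp [nEval, List.foldl_append]

lemma nEval_singleton (e : ℕ × ℕ) (x : ℕ) : nEval [e] x = nArc e.1 e.2 x := rfl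

section basic
variable {n : ℕ}

lemma nQ_lt (hn : 3 ≤ n) {e : ℕ × ℕ} (he : nQ n e) : e.1 < e.2 := by
  rcases he with ⟨h | ⟨h1, h2⟩, hb⟩ <;> omega

lemma nArc_ge (hn : 3 ≤ n) {e : ℕ × ℕ} (he : nQ n e) (x : ℕ) : x ≤ nArc e.1 e.2 x := by
  unfold nArc; split
  · next h => subst h; exact le_of_lt (nQ_lt hn he)
  · exact le_rfl

lemma nArc_lt {e : ℕ × ℕ} (he : nQ n e) {x : ℕ} (hx : x < n) : nArc e.1 e.2 x < n := by
  unfold nArc; split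
  · exact he.2
  · exact hx

lemma nEval_ge (hn : 3 ≤ n) {w : List (ℕ × ℕ)} (hw : ∀ e ∈ w, nQ n e) (x : ℕ) : x ≤ nEval w x := by
  induction w generalizing x with
  | nil => simp
  | cons e w ih =>
    rw [nEval_cons]
    exact le_trans (nArc_ge hn (hw e (by simp)) x) (ih (fun e' he' => hw e' (by simp [he'])) _)

lemma nEval_lt (hn : 3 ≤ n) {w : List (ℕ × ℕ)} (hw : ∀ e ∈ w, nQ n e) {x : ℕ} (hx : x < n) :
    nEval w x < n := by
  induction w generalizing x with
  | nil => simpa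
  | cons e w ih =>
    rw [nEval_cons]
    exact ih (fun e' he' => hw e' (by simp [he'])) (nArc_lt (hw e (by simp)) hx)

lemma nEval_absorb (hn : 3 ≤ n) {w : List (ℕ × ℕ)} (hw : ∀ e ∈ w, nQ n e) :
    nEval w (n - 1) = n - 1 := by
  induction w with
  | nil => simp
  | cons e w ih =>
    rw [nEval_cons]
    have he := hw e (by simp)
    have : nArc e.1 e.2 (n - 1) = n - 1 := by
      unfold nArc; split
      · next h =>
        rcases he with ⟨h1 | ⟨h1, h2⟩, hb⟩ <;> omega
      · rfl
    rw [this]; exact ih (fun e' he' => hw e' (by simp [he']))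

lemma nArc_order (hn : 3 ≤ n) {e : ℕ × ℕ} (he : nQ n e) {x y : ℕ} (hxy : x ≤ y) :
    nArc e.1 e.2 x ≤ nArc e.1 e.2 y ∨ nArc e.1 e.2 x = n - 1 := by
  obtain ⟨hsh, hb⟩ := he
  unfold nArc
  rcases eq_or_lt_of_le hxy with rfl | hlt
  · left; rfl
  · split
    · next h =>
      subst h
      rcases hsh with h1 | ⟨h1, h2⟩
      · left; split <;> omega
      · right; omega
    · next h =>
      split
      · next h2 => left; subst h2; rcases hsh with h1 | ⟨h1, h2⟩ <;> omega
      · left; exact hxy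

lemma nEval_order (hn : 3 ≤ n) {w : List (ℕ × ℕ)} (hw : ∀ e ∈ w, nQ n e) {x y : ℕ} (hxy : x ≤ y) :
    nEval w x ≤ nEval w y ∨ nEval w x = n - 1 := by
  induction w generalizing x y with
  | nil => left; simpa
  | cons e w ih =>
    have he := hw e (by simp)
    have hw' : ∀ e' ∈ w, nQ n e' := fun e' he' => hw e' (by simp [he'])
    rw [nEval_cons, nEval_cons]
    rcases nArc_order hn he hxy with h | h
    · exact ih hw' h
    · right; rw [h]; exact nEval_absorb hn hw'

end basic

section bvfacts
variable {n r : ℕ}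

lemma bv_lt (hn : 3 ≤ n) (hr2 : r + 1 ≤ n) {x : ℕ} (hx : x < n) : bv n r x < n := by
  unfold bv; split_ifs <;> omega

lemma bv_ge {x : ℕ} (hr2 : r + 1 ≤ n) (hx : x < n) : x ≤ bv n r x := by
  unfold bv; split_ifs <;> omega

lemma bv_dup (hn : 3 ≤ n) (hr1 : 2 ≤ r) (hr2 : r + 1 ≤ n) {x y : ℕ}
    (hx : x < n) (hy : y < n) (hxy : x ≠ y) (h : bv n r x = bv n r y) :
    n - 2 ≤ bv n r x := by
  unfold bv at h ⊢; split_ifs at h ⊢ <;> omega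

lemma bv_eq_sub2 (hn : 3 ≤ n) (hr1 : 2 ≤ r) (hr2 : r + 1 ≤ n) {x : ℕ}
    (h : bv n r x = n - 2) : r ≤ x + 2 ∧ x + 3 ≤ n ∧ (n - 3 - x) % 2 = 0 := by
  unfold bv at h; split_ifs at h <;> omega

lemma bv_eq_sub1 (hn : 3 ≤ n) (hr1 : 2 ≤ r) (hr2 : r + 1 ≤ n) {x : ℕ}
    (hx3 : x + 3 ≤ n) (h : bv n r x = n - 1) : r ≤ x + 2 ∧ (n - 3 - x) % 2 = 1 := by
  unfold bv at h; split_ifs at h <;> omega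

lemma bv_mid (hn : 3 ≤ n) {x : ℕ} (h1 : r ≤ x + 2) (h2 : x + 3 ≤ n) :
    bv n r x = if (n - 3 - x) % 2 = 0 then n - 2 else n - 1 := by
  unfold bv; split_ifs <;> omega

lemma bv_top (hn : 3 ≤ n) (hr2 : r + 1 ≤ n) {x : ℕ} (h1 : n ≤ x + 2) :
    bv n r x = n - 1 := by
  unfold bv; split_ifs <;> omega

lemma bv_solo (hr1 : 2 ≤ r) {x : ℕ} (h1 : x + 3 ≤ r) : bv n r x = n - r + x := by
  unfold bv; split_ifs <;> omega

end bvfacts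

section inv

variable {n r : ℕ} {w : List (ℕ × ℕ)}

lemma pre_arcs (hw : ∀ e ∈ w, nQ n e) {u v : List (ℕ × ℕ)} (huv : u ++ v = w) : ∀ e ∈ u, nQ n e :=
  fun e he => hw e (huv ▸ List.mem_append_left v he)

lemma suf_arcs (hw : ∀ e ∈ w, nQ n e) {u v : List (ℕ × ℕ)} (huv : u ++ v = w) : ∀ e ∈ v, nQ n e :=
  fun e he => hw e (huv ▸ List.mem_append_right u he)

lemma final_le (hn : 3 ≤ n) (hw : ∀ e ∈ w, nQ n e) (hβ : ∀ x, x < n → nEval w x = bv n r x) {u v : List (ℕ × ℕ)} (huv : u ++ v = w) {x : ℕ} (hx : x < n) :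
    nEval u x ≤ bv n r x := by
  have h1 : nEval w x = nEval v (nEval u x) := by rw [← huv, nEval_append]
  have h2 := nEval_ge hn (suf_arcs hw huv) (nEval u x)
  rw [hβ x hx] at h1; omega

lemma colocF (hβ : ∀ x, x < n → nEval w x = bv n r x) {u v : List (ℕ × ℕ)} (huv : u ++ v = w) {x y : ℕ}
    (hx : x < n) (hy : y < n) (h : nEval u x = nEval u y) : bv n r x = bv n r y := by
  have h1 : nEval w x = nEval v (nEval u x) := by rw [← huv, nEval_append]
  have h2 : nEval w y = nEval v (nEval u y) := by rw [← huv, nEval_append]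
  rw [hβ x hx] at h1; rw [hβ y hy] at h2; rw [h1, h2, h]

end inv

section inv2

variable {n r : ℕ} {w : List (ℕ × ℕ)}

lemma noMergeCore (hn : 3 ≤ n) (hr1 : 2 ≤ r) (hr2 : r + 1 ≤ n)
    (hw : ∀ e ∈ w, nQ n e) (hβ : ∀ x, x < n → nEval w x = bv n r x)
    {u v : List (ℕ × ℕ)} (huv : u ++ v = w)
    (K0 : ∀ x y, x < y → y < n → bv n r y ≤ n - 2 → nEval u x = n - 1 →
      nEval u y = bv n r y)
    {x y c : ℕ} (hxy : x < y) (hyn : y < n)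
    (hbv : bv n r x = bv n r y) (hc : c + 1 < bv n r x)
    (hxc : nEval u x = c ∨ nEval u x = c + 1)
    (hyc : nEval u y = c ∨ nEval u y = c + 1)
    (hne : nEval u x ≠ nEval u y) : False := by
  have hxn : x < n := lt_trans hxy hyn
  have hu : ∀ e ∈ u, nQ n e := pre_arcs hw huv
  have hd2 : n - 2 ≤ bv n r x := bv_dup hn hr1 hr2 hxn hyn (ne_of_lt hxy) hbv
  have hblt : bv n r x < n := bv_lt hn hr2 hxn
  have hcase : bv n r x = n - 2 ∨ bv n r x = n - 1 := by omega
  rcases hcase with hbx | hbx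
  · -- both destined n-2
    obtain ⟨ha1, ha2, ha3⟩ := bv_eq_sub2 hn hr1 hr2 hbx
    have hby : bv n r y = n - 2 := by rw [← hbv]; exact hbx
    obtain ⟨hb1, hb2, hb3⟩ := bv_eq_sub2 hn hr1 hr2 hby
    have hy2 : x + 2 ≤ y := by omega
    have hmbv : bv n r (x + 1) = n - 1 := by
      rw [bv_mid hn (by omega) (by omega), if_neg (by omega)]
    have ho1 := nEval_order hn hu (show x ≤ x + 1 by omega)
    have ho2 := nEval_order hn hu (show x + 1 ≤ y by omega)
    have hγx : nEval u x ≤ n - 2 := by omega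
    rcases ho1 with h1 | h1
    · rcases ho2 with h2 | h2
      · have hsand : nEval u (x + 1) = nEval u x ∨ nEval u (x + 1) = nEval u y := by
          omega
        rcases hsand with hh | hh
        · have := colocF hβ huv (show x + 1 < n by omega) hxn hh
          omega
        · have := colocF hβ huv (show x + 1 < n by omega) hyn hh
          omega
      · have := K0 (x + 1) y (by omega) hyn (by omega) h2
        omega
    · omega
  · -- both destined n-1
    have hby : bv n r y = n - 1 := by rw [← hbv]; exact hbx
    have hγy : nEval u y ≤ n - 2 := by omega
    have hyy := nEval_ge hn hu y
    obtain ⟨m, hm1, hm2, hmbv, hmn⟩ :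
        ∃ m, x < m ∧ m < y ∧ bv n r m = n - 2 ∧ m < n := by
      by_cases hy2 : y = n - 2
      · obtain ⟨hc1, hc2⟩ := bv_eq_sub1 hn hr1 hr2 (by omega) hbx
        refine ⟨n - 3, by omega, by omega, ?_, by omega⟩
        rw [bv_mid hn (by omega) (by omega), if_pos (by omega)]
      · have hy3 : y + 3 ≤ n := by omega
        obtain ⟨hc1, hc2⟩ := bv_eq_sub1 hn hr1 hr2 (by omega) hbx
        obtain ⟨hd1, hd2⟩ := bv_eq_sub1 hn hr1 hr2 hy3 hby
        refine ⟨x + 1, by omega, by omega, ?_, by omega⟩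
        rw [bv_mid hn (by omega) (by omega), if_pos (by omega)]
    have ho1 := nEval_order hn hu (le_of_lt hm1)
    have ho2 := nEval_order hn hu (le_of_lt hm2)
    have hγx : nEval u x ≤ n - 2 := by omega
    have hγm : nEval u m ≤ bv n r m := final_le hn hw hβ huv hmn
    rcases ho1 with h1 | h1
    · rcases ho2 with h2 | h2
      · have hsand : nEval u m = nEval u x ∨ nEval u m = nEval u y := by omega
        rcases hsand with hh | hh
        · have := colocF hβ huv hmn hxn hh; omega
        · have := colocF hβ huv hmn hyn hh; omega
      · omega
    · omega

lemma JK (hn : 3 ≤ n) (hr1 : 2 ≤ r) (hr2 : r + 1 ≤ n)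
    (hw : ∀ e ∈ w, nQ n e) (hβ : ∀ x, x < n → nEval w x = bv n r x) :
    ∀ u : List (ℕ × ℕ), (∃ v, u ++ v = w) →
      ((∀ x y, x < n → y < n → x ≠ y → nEval u x = nEval u y →
          nEval u x = bv n r x) ∧
       (∀ x y, x < y → y < n → bv n r y ≤ n - 2 → nEval u x = n - 1 →
          nEval u y = bv n r y)) := by
  intro u
  induction u using List.reverseRecOn with
  | nil =>
    intro _
    constructor
    · intro x y _ _ hxy h
      simp only [nEval_nil] at h
      exact absurd h hxy
    · intro x y hxy hy _ hx
      simp only [nEval_nil] at hx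
      omega
  | append_singleton u e ih =>
    rintro ⟨v, huv⟩
    have huv' : u ++ (e :: v) = w := by rw [← huv]; simp
    obtain ⟨J0, K0⟩ := ih ⟨e :: v, huv'⟩
    have hu : ∀ e' ∈ u, nQ n e' := pre_arcs hw huv'
    have hue : nQ n e := hw e (by rw [← huv]; simp)
    have halt : e.1 < e.2 := nQ_lt hn hue
    have heval : ∀ z, nEval (u ++ [e]) z = nArc e.1 e.2 (nEval u z) := fun z => by
      rw [nEval_append, nEval_singleton]
    constructor
    · -- J part
      intro x y hx hy hxy hco
      by_cases hc0 : nEval u x = nEval u y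
      · have hbx := J0 x y hx hy hxy hc0
        rw [heval x]
        unfold nArc
        split
        · next h =>
          exfalso
          have hf : nEval (u ++ [e]) x ≤ bv n r x := final_le hn hw hβ huv hx
          rw [heval x] at hf
          unfold nArc at hf
          rw [if_pos h] at hf
          omega
        · exact hbx
      · have hp : (nEval u x = e.1 ∧ nEval u y = e.2) ∨
            (nEval u y = e.1 ∧ nEval u x = e.2) := by
          rw [heval x, heval y] at hco
          unfold nArc at hco
          split_ifs at hco <;> omega
        have hbvxy : bv n r x = bv n r y := colocF hβ huv hx hy hco
        have hgx : nEval (u ++ [e]) x = e.2 := by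
          rw [heval x]; unfold nArc
          rcases hp with ⟨h1, _⟩ | ⟨_, h2⟩
          · rw [if_pos h1]
          · rw [if_neg (by omega)]; exact h2
        by_cases hfin : e.2 = bv n r x
        · rw [hgx, hfin]
        · exfalso
          have hf : nEval (u ++ [e]) x ≤ bv n r x := final_le hn hw hβ huv hx
          rw [hgx] at hf
          have hbxlt : bv n r x < n := bv_lt hn hr2 hx
          have hb1 : e.2 = e.1 + 1 := by
            rcases hue.1 with h | ⟨_, h2⟩
            · exact h
            · omega
          have hcc : e.1 + 1 < bv n r x := by omega
          have hxe : nEval u x = e.1 ∨ nEval u x = e.1 + 1 := by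
            rcases hp with ⟨h1, _⟩ | ⟨_, h2⟩
            · exact Or.inl h1
            · exact Or.inr (by omega)
          have hye : nEval u y = e.1 ∨ nEval u y = e.1 + 1 := by
            rcases hp with ⟨_, h2⟩ | ⟨h1, _⟩
            · exact Or.inr (by omega)
            · exact Or.inl h1
          rcases lt_or_gt_of_ne hxy with hlt | hgt
          · exact noMergeCore (c := e.1) hn hr1 hr2 hw hβ huv' K0 hlt hy hbvxy hcc
              hxe hye hc0
          · exact noMergeCore (c := e.1) hn hr1 hr2 hw hβ huv' K0 hgt hx hbvxy.symm
              (by omega) hye hxe (Ne.symm hc0)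
    · -- K part
      intro x y hxy hy hbvy hx1
      have hxn : x < n := lt_trans hxy hy
      rw [heval x] at hx1
      rw [heval y]
      by_cases hux : nEval u x = n - 1
      · have hyb := K0 x y hxy hy hbvy hux
        unfold nArc
        split
        · next h =>
          exfalso
          have hf : nEval (u ++ [e]) y ≤ bv n r y := final_le hn hw hβ huv hy
          rw [heval y] at hf
          unfold nArc at hf
          rw [if_pos h] at hf
          omega
        · exact hyb
      · have hxa : nEval u x = e.1 := by
          unfold nArc at hx1
          split_ifs at hx1 with h
          · exact h
          · exact absurd hx1 hux
        have hbn : e.2 = n - 1 := by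
          unfold nArc at hx1; rw [if_pos hxa] at hx1; exact hx1
        have hA : e.1 = n - 2 ∨ e.1 = n - 3 := by
          rcases hue.1 with h | ⟨h, _⟩ <;> omega
        have horder := nEval_order hn hu (le_of_lt hxy)
        have hge : e.1 ≤ nEval u y := by
          rcases horder with h | h
          · omega
          · exact absurd h hux
        have hle : nEval u y ≤ bv n r y := final_le hn hw hβ huv' hy
        by_cases hcol : nEval u y = nEval u x
        · exfalso
          have hf : nEval (u ++ [e]) y ≤ bv n r y := final_le hn hw hβ huv hy
          rw [heval y] at hf
          unfold nArc at hf
          rw [if_pos (by omega)] at hf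
          omega
        · have hgyne : nEval u y ≠ e.1 := by omega
          have hgy : nEval u y = n - 2 := by rcases hA with h | h <;> omega
          have hbvy2 : bv n r y = n - 2 := by omega
          unfold nArc
          rw [if_neg hgyne, hgy, hbvy2]

end inv2

section count

lemma tele (g : ℕ → ℕ) (h : ∀ t, g t ≤ g (t + 1)) (m : ℕ) :
    (∑ t ∈ Finset.range m, (g (t + 1) - g t)) = g m - g 0 := by
  induction m with
  | zero => simp
  | succ m ih =>
    rw [Finset.sum_range_succ, ih]
    have h0 : g 0 ≤ g m := monotone_nat_of_le_succ h (Nat.zero_le m)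
    have h1 := h m
    omega

variable {n r : ℕ} {w : List (ℕ × ℕ)}

lemma main_lower (hn : 3 ≤ n) (hr1 : 2 ≤ r) (hr2 : r + 1 ≤ n)
    (hw : ∀ e ∈ w, nQ n e) (hβ : ∀ x, x < n → nEval w x = bv n r x) :
    ∑ x ∈ Finset.range n, tgt n r x ≤ w.length := by
  have hmem : ∀ t (ht : t < w.length), w[t] ∈ w := fun t ht => List.getElem_mem ht
  have htake : ∀ t (ht : t < w.length), w.take (t + 1) = w.take t ++ [w[t]] := by
    intro t ht
    rw [List.take_succ, List.getElem?_eq_getElem ht]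
    rfl
  have hstep : ∀ t (ht : t < w.length), ∀ x,
      nEval (w.take (t + 1)) x = nArc (w[t]).1 (w[t]).2 (nEval (w.take t) x) := by
    intro t ht x
    rw [htake t ht, nEval_append, nEval_singleton]
  have hmemb : ∀ t (ht : t < w.length), w[t] ∈ w := hmem
  have hmono1 : ∀ x t, nEval (w.take t) x ≤ nEval (w.take (t + 1)) x := by
    intro x t
    by_cases ht : t < w.length
    · rw [hstep t ht x]
      exact nArc_ge hn (hw _ (hmemb t ht)) _
    · rw [List.take_of_length_le (by omega), List.take_of_length_le (by omega)]
  have hmono : ∀ x, Monotone (fun t => nEval (w.take t) x) :=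
    fun x => monotone_nat_of_le_succ (hmono1 x)
  have hFL : ∀ x, x < n → nEval (w.take w.length) x = bv n r x := by
    intro x hx
    rw [List.take_length]
    exact hβ x hx
  have hsrc : ∀ t (ht : t < w.length), ∀ z, nEval (w.take (t + 1)) z ≠ nEval (w.take t) z →
      nEval (w.take t) z = (w[t]).1 := by
    intro t ht z hz
    by_contra h
    apply hz
    rw [hstep t ht z]
    unfold nArc
    rw [if_neg h]
  have huniq : ∀ t (ht : t < w.length), ∀ x y, x < n → y < n →
      nEval (w.take (t + 1)) x ≠ nEval (w.take t) x →
      nEval (w.take (t + 1)) y ≠ nEval (w.take t) y → x = y := by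
    intro t ht x y hx hy hmx hmy
    by_contra hxy
    have hQe := hw _ (hmemb t ht)
    have hxa := hsrc t ht x hmx
    have hya := hsrc t ht y hmy
    have hcol : nEval (w.take t) x = nEval (w.take t) y := by rw [hxa, hya]
    have hJ := (JK hn hr1 hr2 hw hβ (w.take t) ⟨w.drop t, List.take_append_drop t w⟩).1
      x y hx hy hxy hcol
    have hf : nEval (w.take (t + 1)) x ≤ bv n r x :=
      final_le hn hw hβ (List.take_append_drop (t + 1) w) hx
    have hab : (w[t]).1 < (w[t]).2 := nQ_lt hn hQe
    rw [hstep t ht x] at hf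
    unfold nArc at hf
    rw [if_pos hxa] at hf
    omega
  -- total moves bounded by length
  have hsum1 : ∑ x ∈ Finset.range n, ((Finset.range w.length).filter
      (fun t => nEval (w.take (t + 1)) x ≠ nEval (w.take t) x)).card ≤ w.length := by
    have heq : ∑ x ∈ Finset.range n, ((Finset.range w.length).filter
        (fun t => nEval (w.take (t + 1)) x ≠ nEval (w.take t) x)).card
        = ∑ t ∈ Finset.range w.length, ((Finset.range n).filter
        (fun x => nEval (w.take (t + 1)) x ≠ nEval (w.take t) x)).card := by
      simp only [Finset.card_filter]
      rw [Finset.sum_comm]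
    rw [heq]
    calc ∑ t ∈ Finset.range w.length, ((Finset.range n).filter
        (fun x => nEval (w.take (t + 1)) x ≠ nEval (w.take t) x)).card
        ≤ ∑ _t ∈ Finset.range w.length, 1 := by
          refine Finset.sum_le_sum ?_
          intro t htm
          have ht := Finset.mem_range.mp htm
          refine Finset.card_le_one.mpr ?_
          intro a ha b hb
          simp only [Finset.mem_filter, Finset.mem_range] at ha hb
          exact huniq t ht a b ha.1 hb.1 ha.2 hb.2
      _ = w.length := by simp
  -- per-chip lower bound
  have hchip : ∀ x, x < n → tgt n r x ≤ ((Finset.range w.length).filter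
      (fun t => nEval (w.take (t + 1)) x ≠ nEval (w.take t) x)).card := by
    intro x hx
    have htel := tele (fun t => nEval (w.take t) x) (hmono1 x) w.length
    simp only [List.take_zero, nEval_nil] at htel
    rw [hFL x hx] at htel
    have hpoint : ∀ t ∈ Finset.range w.length,
        nEval (w.take (t + 1)) x - nEval (w.take t) x ≤
          (if nEval (w.take (t + 1)) x ≠ nEval (w.take t) x then 1 else 0) +
          (if nEval (w.take t) x = n - 3 ∧ nEval (w.take (t + 1)) x = n - 1
            then 1 else 0) := by
      intro t htm
      have ht := Finset.mem_range.mp htm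
      have hQe := hw _ (hmemb t ht)
      by_cases hmv : nEval (w.take (t + 1)) x = nEval (w.take t) x
      · rw [hmv]; simp
      · have hxa := hsrc t ht x hmv
        have hv : nEval (w.take (t + 1)) x = (w[t]).2 := by
          rw [hstep t ht x]
          unfold nArc
          rw [if_pos hxa]
        rcases hQe.1 with h | ⟨h1, h2⟩ <;> split_ifs <;> omega
    have hsplit : (∑ t ∈ Finset.range w.length,
          ((if nEval (w.take (t + 1)) x ≠ nEval (w.take t) x then 1 else 0) +
          (if nEval (w.take t) x = n - 3 ∧ nEval (w.take (t + 1)) x = n - 1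
            then 1 else 0)))
        = ((Finset.range w.length).filter
            (fun t => nEval (w.take (t + 1)) x ≠ nEval (w.take t) x)).card +
          ((Finset.range w.length).filter
            (fun t => nEval (w.take t) x = n - 3 ∧
              nEval (w.take (t + 1)) x = n - 1)).card := by
      rw [Finset.sum_add_distrib, Finset.card_filter, Finset.card_filter]
    have hkey : bv n r x - x ≤ ((Finset.range w.length).filter
        (fun t => nEval (w.take (t + 1)) x ≠ nEval (w.take t) x)).card +
        ((Finset.range w.length).filter
            (fun t => nEval (w.take t) x = n - 3 ∧
              nEval (w.take (t + 1)) x = n - 1)).card := by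
      rw [← hsplit, ← htel]
      exact Finset.sum_le_sum hpoint
    have hchord2 : ∀ t t', t ∈ Finset.range w.length → t' ∈ Finset.range w.length →
        t < t' → (nEval (w.take t) x = n - 3 ∧ nEval (w.take (t + 1)) x = n - 1) →
        (nEval (w.take t') x = n - 3 ∧ nEval (w.take (t' + 1)) x = n - 1) → False := by
      intro t t' _ _ htt' h1 h2
      have := hmono x (show t + 1 ≤ t' by omega)
      simp only at this
      omega
    have hC1 : ((Finset.range w.length).filter
        (fun t => nEval (w.take t) x = n - 3 ∧
          nEval (w.take (t + 1)) x = n - 1)).card ≤ 1 := by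
      refine Finset.card_le_one.mpr ?_
      intro a ha b hb
      simp only [Finset.mem_filter] at ha hb
      rcases lt_trichotomy a b with h | h | h
      · exact absurd (hchord2 a b ha.1 hb.1 h ha.2 hb.2) not_false
      · exact h
      · exact absurd (hchord2 b a hb.1 ha.1 h hb.2 ha.2) not_false
    have hCbv : bv n r x ≤ n - 2 → ((Finset.range w.length).filter
        (fun t => nEval (w.take t) x = n - 3 ∧
          nEval (w.take (t + 1)) x = n - 1)).card = 0 := by
      intro hb
      rw [Finset.card_eq_zero, Finset.filter_eq_empty_iff]
      intro t htm
      have ht := Finset.mem_range.mp htm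
      intro hcon
      have := hmono x (show t + 1 ≤ w.length by omega)
      simp only at this
      rw [hFL x hx] at this
      omega
    have hCx : n - 2 ≤ x → ((Finset.range w.length).filter
        (fun t => nEval (w.take t) x = n - 3 ∧
          nEval (w.take (t + 1)) x = n - 1)).card = 0 := by
      intro hb
      rw [Finset.card_eq_zero, Finset.filter_eq_empty_iff]
      intro t htm
      intro hcon
      have := nEval_ge hn (fun e he => hw e (List.mem_of_mem_take he)) x
        (w := w.take t)
      omega
    unfold tgt
    split_ifs with h1 h2 h3
    · have hbv := bv_solo (n := n) hr1 h1
      have hc0 := hCbv (by omega)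
      omega
    · have hbv := bv_mid (r := r) hn (by omega) h2
      by_cases hpar : (n - 3 - x) % 2 = 0
      · rw [if_pos hpar] at hbv
        have hc0 := hCbv (by omega)
        omega
      · rw [if_neg hpar] at hbv
        omega
    · have hbv := bv_top hn hr2 (show n ≤ x + 2 by omega)
      have hc0 := hCx (by omega)
      omega
    · exact Nat.zero_le _
  calc ∑ x ∈ Finset.range n, tgt n r x
      ≤ ∑ x ∈ Finset.range n, ((Finset.range w.length).filter
          (fun t => nEval (w.take (t + 1)) x ≠ nEval (w.take t) x)).card := by
        refine Finset.sum_le_sum ?_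
        intro x hxm
        exact hchip x (Finset.mem_range.mp hxm)
    _ ≤ w.length := hsum1

end count

section sumtgt
variable {n r : ℕ}

lemma sum_tgt (hn : 3 ≤ n) (hr1 : 2 ≤ r) (hr2 : r + 1 ≤ n) :
    2 * ∑ x ∈ Finset.range n, tgt n r x = (n - r) * (n + r - 3) + 2 := by
  rw [Finset.range_eq_Ico]
  rw [← Finset.sum_Ico_consecutive _ (Nat.zero_le (r - 2)) (show r - 2 ≤ n by omega)]
  rw [← Finset.sum_Ico_consecutive _ (show r - 2 ≤ n - 2 by omega)
    (show n - 2 ≤ n by omega)]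
  have p1 : ∑ x ∈ Finset.Ico 0 (r - 2), tgt n r x = (r - 2) * (n - r) := by
    rw [Finset.sum_congr rfl (fun x hx => ?_)]
    · rw [Finset.sum_const, Nat.card_Ico, smul_eq_mul, Nat.sub_zero]
    · unfold tgt
      rw [if_pos]
      rw [Finset.mem_Ico] at hx
      omega
  have p2 : ∑ x ∈ Finset.Ico (r - 2) (n - 2), tgt n r x
      = (∑ i ∈ Finset.range (n - r), i) + (n - r) := by
    rw [Finset.sum_Ico_eq_sum_range]
    rw [show n - 2 - (r - 2) = n - r by omega]
    rw [Finset.sum_congr rfl (fun i hi => ?_)]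
    · rw [← Finset.sum_range_reflect (fun i => n - r - i) (n - r)]
      rw [Finset.sum_congr rfl (fun j hj => show n - r - (n - r - 1 - j) = j + 1 from by
        rw [Finset.mem_range] at hj; omega)]
      rw [Finset.sum_add_distrib, Finset.sum_const, smul_eq_mul, mul_one,
        Finset.card_range]
    · rw [Finset.mem_range] at hi
      unfold tgt
      rw [if_neg (by omega), if_pos (by omega)]
      omega
  have p3 : ∑ x ∈ Finset.Ico (n - 2) n, tgt n r x = 1 := by
    have hico : Finset.Ico (n - 2) n = {n - 2, n - 1} := by
      ext a
      simp only [Finset.mem_Ico, Finset.mem_insert, Finset.mem_singleton]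
      omega
    rw [hico, Finset.sum_insert (by simp; omega), Finset.sum_singleton]
    have e1 : tgt n r (n - 2) = 1 := by
      unfold tgt
      rw [if_neg (by omega), if_neg (by omega), if_pos (by omega)]
    have e2 : tgt n r (n - 1) = 0 := by
      unfold tgt
      rw [if_neg (by omega), if_neg (by omega), if_neg (by omega)]
    rw [e1, e2]
  rw [p1, p2, p3]
  obtain ⟨a, rfl⟩ : ∃ a, r = a + 2 := ⟨r - 2, by omega⟩
  obtain ⟨b, rfl⟩ : ∃ b, n = a + 3 + b := ⟨n - a - 3, by omega⟩
  have hS := Finset.sum_range_id_mul_two (a + 3 + b - (a + 2))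
  rw [show a + 3 + b - (a + 2) = b + 1 by omega] at hS
  rw [show a + 3 + b - (a + 2) = b + 1 by omega,
    show a + 2 - 2 = a by omega,
    show a + 3 + b + (a + 2) - 3 = 2 * a + b + 2 by omega,
    show (b + 1) - 1 = b by omega] at *
  zify at hS ⊢
  linear_combination hS

end sumtgt

section words

def pathW (a : ℕ) : ℕ → List (ℕ × ℕ)
  | 0 => []
  | k + 1 => pathW a k ++ [(a + k, a + k + 1)]

def seg (n x : ℕ) : List (ℕ × ℕ) :=
  if (n - 3 - x) % 2 = 0 then pathW x (n - 2 - x)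
  else pathW x (n - 3 - x) ++ [(n - 3, n - 1)]

def midW (n : ℕ) : ℕ → List (ℕ × ℕ)
  | 0 => []
  | k + 1 => midW n k ++ seg n (n - 3 - k)

def soloW (n r : ℕ) : ℕ → List (ℕ × ℕ)
  | 0 => []
  | j + 1 => soloW n r j ++ pathW (r - 3 - j) (n - r)

def fullW (n r : ℕ) : List (ℕ × ℕ) :=
  (n - 2, n - 1) :: (midW n (n - r) ++ soloW n r (r - 2))

lemma pathW_self (a k : ℕ) : nEval (pathW a k) a = a + k := by
  induction k with
  | zero => simp [pathW]
  | succ k ih =>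
    rw [pathW, nEval_append, ih, nEval_singleton]
    unfold nArc
    rw [if_pos rfl]
    omega

lemma pathW_out (a k : ℕ) {p : ℕ} (hp : p < a ∨ a + k ≤ p) :
    nEval (pathW a k) p = p := by
  induction k with
  | zero => simp [pathW]
  | succ k ih =>
    rw [pathW, nEval_append, ih (by omega), nEval_singleton]
    unfold nArc
    rw [if_neg (by omega)]

lemma pathW_arcs {n : ℕ} (a k : ℕ) (h : a + k < n) : ∀ e ∈ pathW a k, nQ n e := by
  induction k with
  | zero => simp [pathW]
  | succ k ih =>
    intro e he
    rw [pathW, List.mem_append] at he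
    rcases he with he | he
    · exact ih (by omega) e he
    · simp only [List.mem_singleton] at he
      subst he
      exact ⟨Or.inl rfl, by omega⟩

lemma seg_self {n x : ℕ} (hn : 3 ≤ n) (hx : x + 3 ≤ n) :
    nEval (seg n x) x = if (n - 3 - x) % 2 = 0 then n - 2 else n - 1 := by
  unfold seg
  split_ifs with h
  · rw [pathW_self]; omega
  · rw [nEval_append, pathW_self, nEval_singleton]
    unfold nArc
    rw [if_pos (by omega)]

lemma seg_lo {n x p : ℕ} (hn : 3 ≤ n) (hx : x + 3 ≤ n) (hp : p < x) :
    nEval (seg n x) p = p := by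
  unfold seg
  split_ifs with h
  · exact pathW_out _ _ (Or.inl hp)
  · rw [nEval_append, pathW_out _ _ (Or.inl hp), nEval_singleton]
    unfold nArc
    rw [if_neg (by omega)]

lemma seg_hi {n x p : ℕ} (hn : 3 ≤ n) (hx : x + 3 ≤ n) (hp : n - 2 ≤ p) :
    nEval (seg n x) p = p := by
  unfold seg
  split_ifs with h
  · exact pathW_out _ _ (Or.inr (by omega))
  · rw [nEval_append, pathW_out _ _ (Or.inr (by omega)), nEval_singleton]
    unfold nArc
    rw [if_neg (by omega)]

lemma seg_arcs {n x : ℕ} (hn : 3 ≤ n) (hx : x + 3 ≤ n) : ∀ e ∈ seg n x, nQ n e := by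
  unfold seg
  split_ifs with h
  · exact pathW_arcs x (n - 2 - x) (by omega)
  · intro e he
    rw [List.mem_append] at he
    rcases he with he | he
    · exact pathW_arcs x (n - 3 - x) (by omega) e he
    · simp only [List.mem_singleton] at he
      subst he
      exact ⟨Or.inr ⟨rfl, rfl⟩, by omega⟩

lemma midW_eval {n r : ℕ} (hn : 3 ≤ n) (hr1 : 2 ≤ r) (hr2 : r + 1 ≤ n) :
    ∀ k, k ≤ n - r → ∀ p,
      nEval (midW n k) p =
        if n - 2 - k ≤ p ∧ p ≤ n - 3 then
          (if (n - 3 - p) % 2 = 0 then n - 2 else n - 1)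
        else p := by
  intro k
  induction k with
  | zero =>
    intro _ p
    rw [if_neg (by omega)]
    simp [midW]
  | succ k ih =>
    intro hk p
    rw [midW, nEval_append, ih (by omega) p]
    have hx3 : (n - 3 - k) + 3 ≤ n := by omega
    by_cases h1 : n - 2 - k ≤ p ∧ p ≤ n - 3
    · rw [if_pos h1]
      have harg : n - 2 ≤ (if (n - 3 - p) % 2 = 0 then n - 2 else n - 1) := by
        split_ifs <;> omega
      rw [seg_hi hn hx3 harg]
      split_ifs <;> omega
    · rw [if_neg h1]
      by_cases h2 : p = n - 3 - k
      · subst h2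
        rw [seg_self hn hx3]
        split_ifs <;> omega
      · by_cases h3 : p < n - 3 - k
        · rw [seg_lo hn hx3 h3]
          split_ifs <;> omega
        · rw [seg_hi hn hx3 (by omega)]
          split_ifs <;> omega

lemma midW_arcs {n r : ℕ} (hn : 3 ≤ n) (hr1 : 2 ≤ r) (hr2 : r + 1 ≤ n) :
    ∀ k, k ≤ n - r → ∀ e ∈ midW n k, nQ n e := by
  intro k
  induction k with
  | zero => simp [midW]
  | succ k ih =>
    intro hk e he
    rw [midW, List.mem_append] at he
    rcases he with he | he
    · exact ih (by omega) e he
    · exact seg_arcs hn (by omega) e he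

lemma soloW_eval {n r : ℕ} (hn : 3 ≤ n) (hr1 : 2 ≤ r) (hr2 : r + 1 ≤ n) :
    ∀ j, j ≤ r - 2 → ∀ p, (p + 3 ≤ r ∨ n - 2 ≤ p) →
      nEval (soloW n r j) p =
        if r - 2 - j ≤ p ∧ p + 3 ≤ r then n - r + p else p := by
  intro j
  induction j with
  | zero =>
    intro _ p hp
    rw [if_neg (by omega)]
    simp [soloW]
  | succ j ih =>
    intro hj p hp
    rw [soloW, nEval_append, ih (by omega) p hp]
    by_cases h1 : r - 2 - j ≤ p ∧ p + 3 ≤ r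
    · rw [if_pos h1, if_pos (by omega)]
      exact pathW_out _ _ (Or.inr (by omega))
    · rw [if_neg h1]
      by_cases h2 : p = r - 3 - j
      · rcases hp with hp | hp
        · subst h2
          rw [pathW_self, if_pos (by omega)]
          omega
        · omega
      · by_cases h3 : p < r - 3 - j
        · rw [pathW_out _ _ (Or.inl h3), if_neg (by omega)]
        · rw [pathW_out _ _ (Or.inr (by omega)), if_neg (by omega)]

lemma soloW_arcs {n r : ℕ} (hn : 3 ≤ n) (hr1 : 2 ≤ r) (hr2 : r + 1 ≤ n) :
    ∀ j, j ≤ r - 2 → ∀ e ∈ soloW n r j, nQ n e := by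
  intro j
  induction j with
  | zero => simp [soloW]
  | succ j ih =>
    intro hj e he
    rw [soloW, List.mem_append] at he
    rcases he with he | he
    · exact ih (by omega) e he
    · exact pathW_arcs _ _ (by omega) e he

lemma fullW_arcs {n r : ℕ} (hn : 3 ≤ n) (hr1 : 2 ≤ r) (hr2 : r + 1 ≤ n) :
    ∀ e ∈ fullW n r, nQ n e := by
  intro e he
  rw [fullW, List.mem_cons, List.mem_append] at he
  rcases he with he | he | he
  · subst he
    exact ⟨Or.inl (by omega), by omega⟩
  · exact midW_arcs hn hr1 hr2 (n - r) le_rfl e he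
  · exact soloW_arcs hn hr1 hr2 (r - 2) le_rfl e he

lemma fullW_eval {n r : ℕ} (hn : 3 ≤ n) (hr1 : 2 ≤ r) (hr2 : r + 1 ≤ n)
    {p : ℕ} (hp : p < n) : nEval (fullW n r) p = bv n r p := by
  rw [fullW, nEval_cons, nEval_append]
  by_cases h1 : p + 3 ≤ r
  · have e1 : nArc (n - 2) (n - 1) p = p := by unfold nArc; rw [if_neg (by omega)]
    rw [e1, midW_eval hn hr1 hr2 (n - r) le_rfl p, if_neg (by omega),
      soloW_eval hn hr1 hr2 (r - 2) le_rfl p (Or.inl h1), if_pos (by omega),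
      bv_solo hr1 h1]
  · by_cases h2 : p + 3 ≤ n
    · have e1 : nArc (n - 2) (n - 1) p = p := by unfold nArc; rw [if_neg (by omega)]
      rw [e1, midW_eval hn hr1 hr2 (n - r) le_rfl p, if_pos (by omega),
        bv_mid hn (by omega) h2]
      by_cases hpar : (n - 3 - p) % 2 = 0
      · rw [if_pos hpar,
          soloW_eval hn hr1 hr2 (r - 2) le_rfl _ (Or.inr (by omega)),
          if_neg (by omega)]
      · rw [if_neg hpar,
          soloW_eval hn hr1 hr2 (r - 2) le_rfl _ (Or.inr (by omega)),
          if_neg (by omega)]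
    · by_cases h3 : p = n - 2
      · have e1 : nArc (n - 2) (n - 1) p = n - 1 := by unfold nArc; rw [if_pos h3]
        rw [e1, midW_eval hn hr1 hr2 (n - r) le_rfl _, if_neg (by omega),
          soloW_eval hn hr1 hr2 (r - 2) le_rfl _ (Or.inr (by omega)),
          if_neg (by omega), bv_top hn hr2 (by omega)]
      · have hp1 : p = n - 1 := by omega
        have e1 : nArc (n - 2) (n - 1) p = p := by unfold nArc; rw [if_neg (by omega)]
        rw [e1, midW_eval hn hr1 hr2 (n - r) le_rfl p, if_neg (by omega),
          soloW_eval hn hr1 hr2 (r - 2) le_rfl p (Or.inr (by omega)),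
          if_neg (by omega), bv_top hn hr2 (by omega)]
        exact hp1

end words




section transfer
variable {n : ℕ}

lemma nQ_bounds (hn : 3 ≤ n) {e : ℕ × ℕ} (he : nQ n e) : e.1 < n ∧ e.2 < n :=
  ⟨lt_trans (nQ_lt hn he) he.2, he.2⟩

lemma evalCast (w : List (Fin n × Fin n)) (x : Fin n) :
    ((wordEval w x : Fin n) : ℕ)
      = nEval (w.map (fun e => ((e.1 : ℕ), (e.2 : ℕ)))) (x : ℕ) := by
  induction w generalizing x with
  | nil => rfl
  | cons e w ih =>
    have h1 : wordEval (e :: w) x = wordEval w (arcMap e.1 e.2 x) := rfl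
    rw [h1, List.map_cons, nEval_cons, ih]
    congr 1
    show ((if x = e.1 then e.2 else x : Fin n) : ℕ)
      = if (x : ℕ) = (e.1 : ℕ) then (e.2 : ℕ) else (x : ℕ)
    split_ifs with h1 h2 h3
    · rfl
    · exact absurd (congrArg Fin.val h1) h2
    · exact absurd (Fin.ext h3) h1
    · rfl

def toFinW (n : ℕ) : List (ℕ × ℕ) → List (Fin n × Fin n)
  | [] => []
  | e :: w =>
    if h : e.1 < n ∧ e.2 < n then (⟨e.1, h.1⟩, ⟨e.2, h.2⟩) :: toFinW n w
    else toFinW n w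

lemma toFinW_map (w : List (ℕ × ℕ)) (H : ∀ e ∈ w, e.1 < n ∧ e.2 < n) :
    (toFinW n w).map (fun e => ((e.1 : ℕ), (e.2 : ℕ))) = w := by
  induction w with
  | nil => rfl
  | cons e w ih =>
    show ((if h : e.1 < n ∧ e.2 < n then (⟨e.1, h.1⟩, ⟨e.2, h.2⟩) :: toFinW n w
      else toFinW n w).map (fun e => ((e.1 : ℕ), (e.2 : ℕ)))) = e :: w
    rw [dif_pos (H e (by simp))]
    simp only [List.map_cons]
    rw [ih (fun e' he' => H e' (by simp [he']))]

lemma toFinW_arcs (hn : 3 ≤ n) (w : List (ℕ × ℕ)) (H : ∀ e ∈ w, nQ n e) :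
    ∀ e ∈ toFinW n w, Qdigraph n e.1 e.2 := by
  induction w with
  | nil => intro e he; simp [toFinW] at he
  | cons e w ih =>
    intro f hf
    have he := H e (by simp)
    have hb := nQ_bounds hn he
    rw [show toFinW n (e :: w)
        = (⟨e.1, hb.1⟩, ⟨e.2, hb.2⟩) :: toFinW n w from by
      show (if h : e.1 < n ∧ e.2 < n then _ else _) = _
      rw [dif_pos hb]] at hf
    rcases List.mem_cons.mp hf with rfl | hf
    · exact he.1
    · exact ih (fun e' he' => H e' (by simp [he'])) f hf

lemma toFinW_eval (hn : 3 ≤ n) (w : List (ℕ × ℕ)) (H : ∀ e ∈ w, nQ n e) (x : Fin n) :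
    ((wordEval (toFinW n w) x : Fin n) : ℕ) = nEval w (x : ℕ) := by
  rw [evalCast, toFinW_map w (fun e he => nQ_bounds hn (H e he))]

lemma bv_lb (hr1 : 2 ≤ r) (hr2 : r + 1 ≤ n) {x : ℕ} (hx : x < n) :
    n - r ≤ bv n r x := by
  unfold bv; split_ifs <;> omega

end transfer

end S14


/-- for `n ≥ 3` and `2 ≤ r ≤ n−1` there is `β ∈ ⟨Q_n⟩` of rank `r` with
`ℓ(Q_n, β) ≥ (n−r)(n+r−3)/2 + 1`. -/
theorem stmt14 (n : ℕ) (hn : 3 ≤ n) (r : ℕ) (hr1 : 2 ≤ r) (hr2 : r ≤ n - 1) :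
    ∃ β : Fin n → Fin n, InGen (Qdigraph n) β ∧ rnk β = r ∧
      (n - r) * (n + r - 3) / 2 + 1 ≤ arcLen (Qdigraph n) β := by
  classical
  have hr2' : r + 1 ≤ n := by omega
  refine ⟨fun x => ⟨S14.bv n r (x : ℕ), S14.bv_lt hn hr2' x.isLt⟩, ?_, ?_, ?_⟩
  · -- InGen
    refine ⟨S14.toFinW n (S14.fullW n r), ?_, ?_, ?_⟩
    · have hb : ((n - 2 : ℕ), (n - 1 : ℕ)).1 < n ∧ ((n - 2 : ℕ), (n - 1 : ℕ)).2 < n :=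
        ⟨by omega, by omega⟩
      show (if h : _ then _ else _) ≠ []
      rw [dif_pos hb]
      simp
    · exact S14.toFinW_arcs hn _ (S14.fullW_arcs hn hr1 hr2')
    · funext x
      apply Fin.ext
      rw [S14.toFinW_eval hn _ (S14.fullW_arcs hn hr1 hr2') x,
        S14.fullW_eval hn hr1 hr2' x.isLt]
  · -- rank
    have h1 : Set.range (fun x : Fin n => (⟨S14.bv n r (x : ℕ), S14.bv_lt hn hr2' x.isLt⟩ : Fin n))
        = ↑(Finset.univ.filter (fun y : Fin n => n - r ≤ (y : ℕ))) := by
      ext y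
      simp only [Set.mem_range, Finset.coe_filter, Finset.mem_univ, true_and,
        Set.mem_setOf_eq]
      constructor
      · rintro ⟨x, rfl⟩
        exact S14.bv_lb hr1 hr2' x.isLt
      · intro hy
        by_cases hc1 : (y : ℕ) = n - 1
        · refine ⟨⟨n - 1, by omega⟩, Fin.ext ?_⟩
          show S14.bv n r (n - 1) = (y : ℕ)
          rw [S14.bv_top hn hr2' (by omega)]
          omega
        · by_cases hc2 : (y : ℕ) = n - 2
          · refine ⟨⟨n - 3, by omega⟩, Fin.ext ?_⟩
            show S14.bv n r (n - 3) = (y : ℕ)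
            rw [S14.bv_mid hn (by omega) (by omega), if_pos (by omega)]
            omega
          · refine ⟨⟨(y : ℕ) - (n - r), by omega⟩, Fin.ext ?_⟩
            show S14.bv n r ((y : ℕ) - (n - r)) = (y : ℕ)
            have hylt : (y : ℕ) < n := y.isLt
            rw [S14.bv_solo hr1 (by omega)]
            omega
    rw [rnk, h1, Set.ncard_coe_finset]
    have h2 : (Finset.univ.filter (fun y : Fin n => n - r ≤ (y : ℕ))).card
        = ((Finset.range n).filter (fun y => n - r ≤ y)).card := by
      rw [Finset.card_filter, Finset.card_filter]
      exact Fin.sum_univ_eq_sum_range (fun j => if n - r ≤ j then 1 else 0) n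
    rw [h2, show (Finset.range n).filter (fun y => n - r ≤ y) = Finset.Ico (n - r) n from by
      ext a
      simp only [Finset.mem_filter, Finset.mem_range, Finset.mem_Ico]
      omega]
    rw [Nat.card_Ico]
    omega
  · -- length lower bound
    have harcs0 := S14.toFinW_arcs hn _ (S14.fullW_arcs hn hr1 hr2')
    have heval0 : wordEval (S14.toFinW n (S14.fullW n r))
        = fun x : Fin n => (⟨S14.bv n r (x : ℕ), S14.bv_lt hn hr2' x.isLt⟩ : Fin n) := by
      funext x
      apply Fin.ext
      rw [S14.toFinW_eval hn _ (S14.fullW_arcs hn hr1 hr2') x,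
        S14.fullW_eval hn hr1 hr2' x.isLt]
    refine le_csInf ⟨(S14.toFinW n (S14.fullW n r)).length,
      S14.toFinW n (S14.fullW n r), rfl, harcs0, heval0⟩ ?_
    rintro k ⟨w', hlen, harcs, heval⟩
    have hWq : ∀ e ∈ w'.map (fun e => ((e.1 : ℕ), (e.2 : ℕ))), S14.nQ n e := by
      intro e he
      obtain ⟨f, hf, rfl⟩ := List.mem_map.mp he
      exact ⟨harcs f hf, f.2.isLt⟩
    have hWβ : ∀ x, x < n →
        S14.nEval (w'.map (fun e => ((e.1 : ℕ), (e.2 : ℕ)))) x = S14.bv n r x := by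
      intro x hx
      have hc := S14.evalCast w' ⟨x, hx⟩
      rw [heval] at hc
      exact hc.symm
    have hml := S14.main_lower hn hr1 hr2' hWq hWβ
    have hst := S14.sum_tgt (n := n) (r := r) hn hr1 hr2'
    rw [List.length_map, hlen] at hml
    generalize hP : (n - r) * (n + r - 3) = P at hst ⊢
    omega
end
end

section
/- Let n ≥ 3, let T be a strong tournament on {1,…,n}, and let S be a subset of {1,…,n} of size r with 1 ≤ r ≤ n − 1. Then there exists an idempotent α ∈ ⟨T⟩ whose image equals S and such that ℓ(T, α) = n − r. -/
noncomputable section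

variable {V : Type*}

section Aux

variable {n : ℕ} (T : Fin n → Fin n → Prop)

lemma wordEval_append (w : List (Fin n × Fin n)) (e : Fin n × Fin n) (x : Fin n) :
    wordEval (w ++ [e]) x = arcMap e.1 e.2 (wordEval w x) := by
  simp [wordEval, List.foldl_append]

lemma rank_lemma (w : List (Fin n × Fin n)) :
    n ≤ (Finset.image (wordEval w) Finset.univ).card + w.length := by
  induction w using List.reverseRecOn with
  | nil =>
    have h : wordEval ([] : List (Fin n × Fin n)) = id := rfl
    rw [h, Finset.image_id, Finset.card_univ]
    simp
  | append_singleton w e ih =>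
    have key : Finset.image (wordEval (w ++ [e])) Finset.univ =
        Finset.image (arcMap e.1 e.2) (Finset.image (wordEval w) Finset.univ) := by
      rw [Finset.image_image]
      apply Finset.image_congr
      intro x _
      exact wordEval_append w e x
    have sub : Finset.image (wordEval w) Finset.univ ⊆
        insert e.1 (Finset.image (arcMap e.1 e.2) (Finset.image (wordEval w) Finset.univ)) := by
      intro y hy
      by_cases hy1 : y = e.1
      · exact Finset.mem_insert.mpr (Or.inl hy1)
      · exact Finset.mem_insert.mpr (Or.inr (Finset.mem_image.mpr ⟨y, hy, by simp [arcMap, hy1]⟩))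
    have h1 := Finset.card_le_card sub
    have h2 := Finset.card_insert_le e.1
      (Finset.image (arcMap e.1 e.2) (Finset.image (wordEval w) Finset.univ))
    rw [← key] at h1 h2
    simp only [List.length_append, List.length_singleton]
    omega

lemma cross_lemma {B : Finset (Fin n)} {u v : Fin n}
    (h : Relation.ReflTransGen T u v) (hv : v ∈ B) :
    u ∉ B → ∃ a b : Fin n, a ∉ B ∧ b ∈ B ∧ T a b := by
  induction h using Relation.ReflTransGen.head_induction_on with
  | refl => exact fun hu => absurd hv hu
  | @head a c hac hcv ih =>
    intro ha
    by_cases hc : c ∈ B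
    · exact ⟨a, c, ha, hc, hac⟩
    · exact ih hc

lemma build_lemma (hstrong : IsStrongDigraph T) :
    ∀ (k : ℕ) (B : Finset (Fin n)), B.Nonempty → B.card + k = n →
      ∃ w : List (Fin n × Fin n), w.length = k ∧ (∀ e ∈ w, T e.1 e.2) ∧
        (∀ x ∈ B, wordEval w x = x) ∧ (∀ x, wordEval w x ∈ B) := by
  intro k
  induction k with
  | zero =>
    intro B _ hcard
    have hB : B = Finset.univ := Finset.eq_univ_of_card B (by simpa using hcard)
    exact ⟨[], rfl, by simp, fun x _ => rfl, fun x => by rw [hB]; exact Finset.mem_univ x⟩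
  | succ k ih =>
    intro B hBne hcard
    obtain ⟨v, hv⟩ := hBne
    have hBnu : B ≠ Finset.univ := by
      intro h
      rw [h, Finset.card_univ, Fintype.card_fin] at hcard
      omega
    obtain ⟨u, hu⟩ : ∃ u, u ∉ B := by
      by_contra h
      push_neg at h
      exact hBnu (Finset.eq_univ_of_forall h)
    obtain ⟨a, b, ha, hb, hab⟩ := cross_lemma T (hstrong u v) hv hu
    obtain ⟨w', hlen, harcs, hfix, hinto⟩ := ih (insert a B) ⟨v, Finset.mem_insert_of_mem hv⟩
      (by rw [Finset.card_insert_of_notMem ha]; omega)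
    refine ⟨w' ++ [(a, b)], by simp [hlen], ?_, ?_, ?_⟩
    · intro e he
      rcases List.mem_append.mp he with h1 | h1
      · exact harcs e h1
      · simp at h1; rw [h1]; exact hab
    · intro x hx
      rw [wordEval_append, hfix x (Finset.mem_insert_of_mem hx)]
      have : x ≠ a := fun h => ha (h ▸ hx)
      simp [arcMap, this]
    · intro x
      rw [wordEval_append]
      rcases Finset.mem_insert.mp (hinto x) with h1 | h1
      · simp [arcMap, h1, hb]
      · have : wordEval w' x ≠ a := fun h => ha (h ▸ h1)
        simpa [arcMap, this] using h1

end Aux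


/-- for `n ≥ 3`, a strong tournament `T` on `{1,…,n}` and an `r`-subset `S`
of `{1,…,n}` with `1 ≤ r ≤ n−1`, there is an idempotent `α ∈ ⟨T⟩` with image `S` and
`ℓ(T, α) = n − r`. -/
theorem stmt17 (n : ℕ) (hn : 3 ≤ n) (T : Fin n → Fin n → Prop)
    (hT : IsTournament T) (hstrong : IsStrongDigraph T) (r : ℕ)
    (hr1 : 1 ≤ r) (hr2 : r ≤ n - 1) (S : Finset (Fin n)) (hS : S.card = r) :
    ∃ α : Fin n → Fin n, InGen T α ∧ α ∘ α = α ∧ Set.range α = ↑S ∧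
      arcLen T α = n - r := by
  have hrn : r < n := by omega
  have hSne : S.Nonempty := Finset.card_pos.mp (by omega)
  obtain ⟨w, hlen, harcs, hfix, hinto⟩ := build_lemma T hstrong (n - r) S hSne (by omega)
  set α : Fin n → Fin n := wordEval w with hα
  have hrange : Set.range α = ↑S := by
    ext y
    constructor
    · rintro ⟨x, rfl⟩
      exact hinto x
    · intro hy
      exact ⟨y, hfix y hy⟩
  have hidem : α ∘ α = α := by
    funext x
    exact hfix (α x) (hinto x)
  have hwne : w ≠ [] := by
    intro h
    rw [h] at hlen
    simp at hlen
    omega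
  refine ⟨α, ⟨w, hwne, harcs, rfl⟩, hidem, hrange, ?_⟩
  have himg : Finset.image α Finset.univ = S := by
    ext y
    simp only [Finset.mem_image, Finset.mem_univ, true_and]
    constructor
    · rintro ⟨x, rfl⟩
      exact hinto x
    · intro hy
      exact ⟨y, hfix y hy⟩
  apply le_antisymm
  · exact Nat.sInf_le ⟨w, hlen, harcs, rfl⟩
  · refine le_csInf ⟨n - r, ?_⟩ ?_
    · exact ⟨w, hlen, harcs, rfl⟩
    rintro k ⟨w', hlen', _, heval'⟩
    have := rank_lemma w'
    rw [heval', himg, hS, hlen'] at this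
    omega
end
end
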